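/- Let m ≥ 2 and let P be an m×m row-stochastic matrix whose entries all lie in [κ₁, κ₂] with κ₁ > 0. Suppose u* ∈ Δ^m satisfies u*_z > 0 for all z and φ(u*;P) = C(P). Then for every u ∈ Δ^m, (ξ/(2κ₂))·‖(u−u*)ᵀP‖² ≤ C(P) − φ(u;P) ≤ (ξ/(2κ₁))·‖(u−u*)ᵀP‖², where ‖·‖ is the Euclidean norm on ℝ^m and ξ = log₂ e. -/

import Mathlib

open Finset

/-- The probability simplex Δ^m. -/
def simplex (m : ℕ) : Set (Fin m → ℝ) :=
  {u | (∀ z, 0 ≤ u z) ∧ ∑ z, u z = 1}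

/-- Shannon entropy (base 2) of a nonnegative vector, with `0 · log₂ 0 = 0`. -/
noncomputable def entH {m : ℕ} (v : Fin m → ℝ) : ℝ :=
  ∑ y, -(v y * Real.logb 2 (v y))

/-- The channel function φ(u;P) = h(uᵀP) − ∑_z u_z h(P_z). -/
noncomputable def phi {m : ℕ} (u : Fin m → ℝ) (P : Matrix (Fin m) (Fin m) ℝ) : ℝ :=
  entH (fun y => ∑ z, u z * P z y) - ∑ z, u z * entH (P z)

/-- The channel capacity C(P) = sup_{u ∈ Δ^m} φ(u;P). -/
noncomputable def cap {m : ℕ} (P : Matrix (Fin m) (Fin m) ℝ) : ℝ :=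
  sSup ((fun u => phi u P) '' simplex m)

section Aux
open Set


/-- If `G p = 0`, `G' p = 0`, `G` has derivative `G'` on `[a,b]`, and `G'` is monotone on
`[a,b]`, then `G ≥ 0` on `[a,b]`. -/
lemma nonneg_of_min_at (a b p : ℝ) (G G' : ℝ → ℝ) (hp : p ∈ Icc a b)
    (hG : ∀ x ∈ Icc a b, HasDerivAt G (G' x) x)
    (hG0 : G p = 0) (hG'0 : G' p = 0)
    (hmono : MonotoneOn G' (Icc a b)) :
    ∀ q ∈ Icc a b, 0 ≤ G q := by
  intro q hq
  have hcont : ContinuousOn G (Icc a b) := fun x hx => (hG x hx).continuousAt.continuousWithinAt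
  rcases le_total p q with hpq | hpq
  · have hmg : MonotoneOn G (Icc p b) := by
      apply monotoneOn_of_hasDerivWithinAt_nonneg (convex_Icc p b)
        (hcont.mono (Icc_subset_Icc_left hp.1)) (f' := G')
      · intro x hx
        have hx' : x ∈ Icc a b := Icc_subset_Icc_left hp.1 (interior_subset hx)
        exact (hG x hx').hasDerivWithinAt
      · intro x hx
        rw [interior_Icc] at hx
        have hx' : x ∈ Icc a b := Icc_subset_Icc_left hp.1 ⟨hx.1.le, hx.2.le⟩
        have := hmono hp hx' hx.1.le
        rw [hG'0] at this; exact this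
    have := hmg ⟨le_refl p, hpq.trans hq.2⟩ ⟨hpq, hq.2⟩ hpq
    rw [hG0] at this; exact this
  · have hmg : AntitoneOn G (Icc a p) := by
      apply antitoneOn_of_hasDerivWithinAt_nonpos (convex_Icc a p)
        (hcont.mono (Icc_subset_Icc_right hp.2)) (f' := G')
      · intro x hx
        have hx' : x ∈ Icc a b := Icc_subset_Icc_right hp.2 (interior_subset hx)
        exact (hG x hx').hasDerivWithinAt
      · intro x hx
        rw [interior_Icc] at hx
        have hx' : x ∈ Icc a b := Icc_subset_Icc_right hp.2 ⟨hx.1.le, hx.2.le⟩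
        have := hmono hx' hp hx.2.le
        rw [hG'0] at this; exact this
    have := hmg ⟨hq.1, hpq⟩ ⟨hp.1, le_refl p⟩ hpq
    rw [hG0] at this; exact this

lemma breg_lower (a b p q : ℝ) (ha : 0 < a) (hp : p ∈ Icc a b) (hq : q ∈ Icc a b) :
    (q - p) ^ 2 / (2 * b) ≤ q * (Real.log q - Real.log p) - q + p := by
  have hb : 0 < b := ha.trans_le (hp.1.trans hp.2)
  set G : ℝ → ℝ := fun x => x * (Real.log x - Real.log p) - x + p - (x - p) ^ 2 / (2 * b) with hGdef
  set G' : ℝ → ℝ := fun x => Real.log x - Real.log p - (x - p) / b with hG'def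
  have hG : ∀ x ∈ Icc a b, HasDerivAt G (G' x) x := by
    intro x hx
    have hx0 : 0 < x := ha.trans_le hx.1
    have h1 : HasDerivAt (fun x : ℝ => x * (Real.log x - Real.log p))
        (1 * (Real.log x - Real.log p) + x * x⁻¹) x :=
      (hasDerivAt_id x).mul ((Real.hasDerivAt_log hx0.ne').sub_const _)
    have h2 : HasDerivAt (fun x : ℝ => (x - p) ^ 2 / (2 * b))
        ((2 * (x - p) ^ 1 * 1) / (2 * b)) x :=
      (((hasDerivAt_id x).sub_const p).pow 2).div_const (2 * b)
    have := ((h1.sub (hasDerivAt_id x)).add_const p).sub h2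
    convert this using 1
    case e'_9 => simp only [hG'def]; rw [mul_inv_cancel₀ hx0.ne']; field_simp [hb.ne']; ring
    all_goals rfl
  have hG'mono : MonotoneOn G' (Icc a b) := by
    apply monotoneOn_of_hasDerivWithinAt_nonneg (convex_Icc a b)
      (f' := fun x => 1 / x - 1 / b)
    · intro x hx
      have hx0 : 0 < x := ha.trans_le hx.1
      exact (((Real.hasDerivAt_log hx0.ne').sub_const _).sub
        (((hasDerivAt_id x).sub_const p).div_const b)).continuousAt.continuousWithinAt
    · intro x hx
      have hx0 : 0 < x := ha.trans_le (interior_subset hx).1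
      have := (((Real.hasDerivAt_log hx0.ne').sub_const (Real.log p)).sub
        (((hasDerivAt_id x).sub_const p).div_const b))
      convert this.hasDerivWithinAt using 1
      case e'_9 => rw [one_div]
      all_goals rfl
    · intro x hx
      rw [interior_Icc] at hx
      have hx0 : 0 < x := ha.trans hx.1
      have : 1 / b ≤ 1 / x := one_div_le_one_div_of_le hx0 hx.2.le
      linarith
  have key := nonneg_of_min_at a b p G G' hp hG (by simp [hGdef]) (by simp [hG'def]) hG'mono q hq
  simp only [hGdef] at key
  linarith

lemma breg_upper (a b p q : ℝ) (ha : 0 < a) (hp : p ∈ Icc a b) (hq : q ∈ Icc a b) :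
    q * (Real.log q - Real.log p) - q + p ≤ (q - p) ^ 2 / (2 * a) := by
  set G : ℝ → ℝ := fun x => (x - p) ^ 2 / (2 * a) - (x * (Real.log x - Real.log p) - x + p)
    with hGdef
  set G' : ℝ → ℝ := fun x => (x - p) / a - (Real.log x - Real.log p) with hG'def
  have hG : ∀ x ∈ Icc a b, HasDerivAt G (G' x) x := by
    intro x hx
    have hx0 : 0 < x := ha.trans_le hx.1
    have h1 : HasDerivAt (fun x : ℝ => x * (Real.log x - Real.log p))
        (1 * (Real.log x - Real.log p) + x * x⁻¹) x :=
      (hasDerivAt_id x).mul ((Real.hasDerivAt_log hx0.ne').sub_const _)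
    have h2 : HasDerivAt (fun x : ℝ => (x - p) ^ 2 / (2 * a))
        ((2 * (x - p) ^ 1 * 1) / (2 * a)) x :=
      (((hasDerivAt_id x).sub_const p).pow 2).div_const (2 * a)
    have := h2.sub ((h1.sub (hasDerivAt_id x)).add_const p)
    convert this using 1
    case e'_9 => simp only [hG'def]; rw [mul_inv_cancel₀ hx0.ne']; field_simp [ha.ne']; ring
    all_goals rfl
  have hG'mono : MonotoneOn G' (Icc a b) := by
    apply monotoneOn_of_hasDerivWithinAt_nonneg (convex_Icc a b)
      (f' := fun x => 1 / a - 1 / x)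
    · intro x hx
      have hx0 : 0 < x := ha.trans_le hx.1
      exact ((((hasDerivAt_id x).sub_const p).div_const a).sub
        ((Real.hasDerivAt_log hx0.ne').sub_const _)).continuousAt.continuousWithinAt
    · intro x hx
      have hx0 : 0 < x := ha.trans_le (interior_subset hx).1
      have := ((((hasDerivAt_id x).sub_const p).div_const a).sub
        ((Real.hasDerivAt_log hx0.ne').sub_const (Real.log p)))
      convert this.hasDerivWithinAt using 1
      case e'_9 => rw [one_div, one_div]
      all_goals rfl
    · intro x hx
      rw [interior_Icc] at hx
      have hx0 : 0 < x := ha.trans hx.1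
      have : 1 / x ≤ 1 / a := one_div_le_one_div_of_le ha hx.1.le
      linarith
  have key := nonneg_of_min_at a b p G G' hp hG (by simp [hGdef]) (by simp [hG'def]) hG'mono q hq
  simp only [hGdef] at key
  linarith

end Aux

/-- for a row-stochastic P whose entries lie in [κ₁, κ₂] with κ₁ > 0,
and a strictly positive maximizer u* of φ(·;P) on Δ^m, for every u ∈ Δ^m we have
(ξ/(2κ₂))·‖(u−u*)ᵀP‖² ≤ C(P) − φ(u;P) ≤ (ξ/(2κ₁))·‖(u−u*)ᵀP‖², with ξ = log₂ e. -/
theorem capacity_quadratic_sensitivity {m : ℕ} (hm : 2 ≤ m)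
    (P : Matrix (Fin m) (Fin m) ℝ) (κ₁ κ₂ : ℝ) (hκ₁ : 0 < κ₁)
    (hPbound : ∀ z y, P z y ∈ Set.Icc κ₁ κ₂) (hProw : ∀ z, ∑ y, P z y = 1)
    (ustar : Fin m → ℝ) (hustar : ustar ∈ simplex m) (hupos : ∀ z, 0 < ustar z)
    (hopt : phi ustar P = cap P)
    (u : Fin m → ℝ) (hu : u ∈ simplex m) :
    (Real.logb 2 (Real.exp 1) / (2 * κ₂)) *
        (∑ y, (∑ z, (u z - ustar z) * P z y) ^ 2) ≤ cap P - phi u P ∧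
    cap P - phi u P ≤ (Real.logb 2 (Real.exp 1) / (2 * κ₁)) *
        (∑ y, (∑ z, (u z - ustar z) * P z y) ^ 2) := by
  have hL : (0:ℝ) < Real.log 2 := Real.log_pos (by norm_num)
  have hξ : Real.logb 2 (Real.exp 1) = (Real.log 2)⁻¹ := by
    simp [Real.logb, Real.log_exp]
  -- output distribution
  set qs : Fin m → ℝ := fun y => ∑ z, ustar z * P z y with hqs
  -- basic facts about output distributions
  have hqmem : ∀ v ∈ simplex m, ∀ y, (∑ z, v z * P z y) ∈ Set.Icc κ₁ κ₂ := by
    intro v hv y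
    constructor
    · calc κ₁ = ∑ z, v z * κ₁ := by rw [← Finset.sum_mul, hv.2, one_mul]
        _ ≤ ∑ z, v z * P z y :=
          Finset.sum_le_sum fun z _ =>
            mul_le_mul_of_nonneg_left (hPbound z y).1 (hv.1 z)
    · calc (∑ z, v z * P z y) ≤ ∑ z, v z * κ₂ :=
          Finset.sum_le_sum fun z _ =>
            mul_le_mul_of_nonneg_left (hPbound z y).2 (hv.1 z)
        _ = κ₂ := by rw [← Finset.sum_mul, hv.2, one_mul]
  have hqsum : ∀ v ∈ simplex m, ∑ y, ∑ z, v z * P z y = 1 := by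
    intro v hv
    rw [Finset.sum_comm]
    have : ∀ z, ∑ y, v z * P z y = v z := by
      intro z; rw [← Finset.mul_sum, hProw, mul_one]
    simp only [this]
    exact hv.2
  have hqsmem : ∀ y, qs y ∈ Set.Icc κ₁ κ₂ := hqmem ustar hustar
  have hqssum : ∑ y, qs y = 1 := hqsum ustar hustar
  -- c z : relative entropy of row z w.r.t. qs, in nats
  set c : Fin m → ℝ := fun z => ∑ y, P z y * (Real.log (P z y) - Real.log (qs y)) with hc
  set g : ℝ → ℝ → ℝ := fun p x => x * (Real.log x - Real.log p) - x + p with hg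
  -- swap lemma
  have hswap : ∀ (v : Fin m → ℝ) (f : Fin m → ℝ),
      ∑ y, (∑ z, v z * P z y) * f y = ∑ z, v z * ∑ y, P z y * f y := by
    intro v f
    have h1 : ∀ y, (∑ z, v z * P z y) * f y = ∑ z, v z * (P z y * f y) := by
      intro y
      rw [Finset.sum_mul]
      exact Finset.sum_congr rfl fun z _ => mul_assoc _ _ _
    rw [Finset.sum_congr rfl fun y _ => h1 y, Finset.sum_comm]
    exact Finset.sum_congr rfl fun z _ => (Finset.mul_sum _ _ _).symm
  -- the key identity
  have hiden : ∀ v ∈ simplex m,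
      phi v P = (∑ z, v z * c z - ∑ y, g (qs y) (∑ z, v z * P z y)) / Real.log 2 := by
    intro v hv
    have e1 : phi v P = (-(∑ y, (∑ z, v z * P z y) * Real.log (∑ z, v z * P z y))
        + ∑ z, v z * ∑ y, P z y * Real.log (P z y)) / Real.log 2 := by
      simp only [phi, entH, Real.logb]
      rw [eq_div_iff hL.ne']
      simp only [sub_mul, Finset.sum_mul, mul_assoc, neg_mul, div_mul_cancel₀ _ hL.ne',
        neg_add_rev, neg_neg, mul_neg, Finset.sum_neg_distrib]
      ring_nf
    rw [e1]
    congr 1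
    have e2 : ∑ z, v z * c z = ∑ z, v z * ∑ y, P z y * Real.log (P z y)
        - ∑ y, (∑ z, v z * P z y) * Real.log (qs y) := by
      rw [hswap v (fun y => Real.log (qs y))]
      simp only [hc, mul_sub, Finset.sum_sub_distrib, Finset.mul_sum]
    have e3 : ∑ y, g (qs y) (∑ z, v z * P z y)
        = ∑ y, (∑ z, v z * P z y) * Real.log (∑ z, v z * P z y)
          - ∑ y, (∑ z, v z * P z y) * Real.log (qs y) := by
      simp only [hg, mul_sub, Finset.sum_sub_distrib, Finset.sum_add_distrib]
      rw [hqsum v hv, hqssum]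
      ring
    rw [e2, e3]; ring
  -- nonnegativity of g terms
  have hgnn : ∀ v ∈ simplex m, ∀ y, 0 ≤ g (qs y) (∑ z, v z * P z y) := by
    intro v hv y
    have h1 := breg_lower κ₁ κ₂ (qs y) (∑ z, v z * P z y) hκ₁ (hqsmem y) (hqmem v hv y)
    have h2κ : 0 < 2 * κ₂ := by
      have : κ₁ ≤ κ₂ := (hqsmem y).1.trans (hqsmem y).2
      linarith
    have h2 : (0:ℝ) ≤ ((∑ z, v z * P z y) - qs y) ^ 2 / (2 * κ₂) :=
      div_nonneg (sq_nonneg _) h2κ.le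
    simp only [hg]
    linarith
  -- bounded above, hence phi ≤ cap on the simplex
  have hbdd : BddAbove ((fun u => phi u P) '' simplex m) := by
    refine ⟨(∑ z, |c z|) / Real.log 2, ?_⟩
    rintro x ⟨v, hv, rfl⟩
    show phi v P ≤ _
    rw [hiden v hv]
    have h1 : ∑ z, v z * c z ≤ ∑ z, |c z| := by
      apply Finset.sum_le_sum
      intro z _
      have hv1 : v z ≤ 1 := by
        have := Finset.single_le_sum (f := v) (fun i _ => hv.1 i) (Finset.mem_univ z)
        rw [hv.2] at this; exact this
      calc v z * c z ≤ v z * |c z| := mul_le_mul_of_nonneg_left (le_abs_self _) (hv.1 z)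
        _ ≤ 1 * |c z| := mul_le_mul_of_nonneg_right hv1 (abs_nonneg _)
        _ = |c z| := one_mul _
    have h2 : 0 ≤ ∑ y, g (qs y) (∑ z, v z * P z y) :=
      Finset.sum_nonneg fun y _ => hgnn v hv y
    gcongr
    linarith
  have hub : ∀ v ∈ simplex m, phi v P ≤ cap P := fun v hv => le_csSup hbdd ⟨v, hv, rfl⟩
  set S : ℝ := ∑ z, ustar z * c z with hS
  have hGstar : ∑ y, g (qs y) (∑ z, ustar z * P z y) = 0 := by
    apply Finset.sum_eq_zero
    intro y _
    show g (qs y) (qs y) = 0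
    simp [hg]
  have hcapS : cap P = S / Real.log 2 := by
    rw [← hopt, hiden ustar hustar, hGstar, sub_zero]
  -- KKT: each c z ≤ S
  have hSle : ∀ z, c z ≤ S := by
    intro z
    set K : ℝ := (∑ y, (P z y - qs y) ^ 2) / (2 * κ₁) with hK
    have hKnn : 0 ≤ K :=
      div_nonneg (Finset.sum_nonneg fun y _ => sq_nonneg _) (by linarith)
    have key : ∀ t : ℝ, 0 < t → t ≤ 1 → c z - S ≤ t * K := by
      intro t ht ht1
      set v : Fin m → ℝ := fun w => (1 - t) * ustar w + t * (if w = z then 1 else 0) with hvdef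
      have hv : v ∈ simplex m := by
        constructor
        · intro w
          have h1 : 0 ≤ (1 - t) * ustar w := mul_nonneg (by linarith) (hupos w).le
          have h2 : 0 ≤ t * (if w = z then (1:ℝ) else 0) :=
            mul_nonneg ht.le (by split <;> norm_num)
          exact add_nonneg h1 h2
        · simp only [hvdef, Finset.sum_add_distrib, ← Finset.mul_sum, hustar.2,
            Finset.sum_ite_eq', Finset.mem_univ, if_true]
          ring
      have hqv : ∀ y, (∑ w, v w * P w y) = (1 - t) * qs y + t * P z y := by
        intro y
        simp only [hvdef, add_mul, Finset.sum_add_distrib, mul_assoc, ← Finset.mul_sum]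
        congr 2
        rw [Finset.sum_congr rfl (fun w _ => ite_mul (w = z) (1:ℝ) 0 (P w y))]
        simp
      have hvc : ∑ w, v w * c w = (1 - t) * S + t * c z := by
        simp only [hvdef, add_mul, Finset.sum_add_distrib, mul_assoc, ← Finset.mul_sum, hS]
        congr 2
        rw [Finset.sum_congr rfl (fun w _ => ite_mul (w = z) (1:ℝ) 0 (c w))]
        simp
      have hphiv := hub v hv
      rw [hiden v hv, hcapS] at hphiv
      have hmul := mul_le_mul_of_nonneg_right hphiv hL.le
      rw [div_mul_cancel₀ _ hL.ne', div_mul_cancel₀ _ hL.ne'] at hmul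
      rw [hvc] at hmul
      have hGt : ∑ y, g (qs y) (∑ w, v w * P w y) ≤ t ^ 2 * (2 * κ₁ * K) / (2 * κ₁) := by
        have hstep : ∀ y ∈ Finset.univ, g (qs y) (∑ w, v w * P w y)
            ≤ t ^ 2 * (P z y - qs y) ^ 2 / (2 * κ₁) := by
          intro y _
          have hb := breg_upper κ₁ κ₂ (qs y) (∑ w, v w * P w y) hκ₁ (hqsmem y) (hqmem v hv y)
          have he : ((∑ w, v w * P w y) - qs y) ^ 2 = t ^ 2 * (P z y - qs y) ^ 2 := by
            rw [hqv y]; ring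
          simp only [hg]
          rw [he] at hb
          convert hb using 2
        calc ∑ y, g (qs y) (∑ w, v w * P w y)
            ≤ ∑ y, t ^ 2 * (P z y - qs y) ^ 2 / (2 * κ₁) := Finset.sum_le_sum hstep
          _ = t ^ 2 * (2 * κ₁ * K) / (2 * κ₁) := by
              rw [hK, ← Finset.sum_div, ← Finset.mul_sum]
              field_simp
      have hKsimp : t ^ 2 * (2 * κ₁ * K) / (2 * κ₁) = t ^ 2 * K := by
        field_simp
      rw [hKsimp] at hGt
      have hts : t * (c z - S) ≤ t ^ 2 * K := by nlinarith [hGt, hmul]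
      nlinarith [hts, ht]
    by_contra h
    push_neg at h
    have hd : 0 < c z - S := by linarith
    have hK1 : (0:ℝ) < K + 1 := by linarith
    set t := min 1 ((c z - S) / (K + 1)) with htdef
    have ht : 0 < t := lt_min one_pos (div_pos hd hK1)
    have h1 := key t ht (min_le_left _ _)
    have h2 : t * K ≤ ((c z - S) / (K + 1)) * K :=
      mul_le_mul_of_nonneg_right (min_le_right _ _) hKnn
    have h3 : ((c z - S) / (K + 1)) * K < c z - S := by
      rw [div_mul_eq_mul_div, div_lt_iff₀ hK1]
      nlinarith
    linarith
  -- hence c z = S for all z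
  have hceq : ∀ z, c z = S := by
    have h0 : ∑ z, ustar z * (S - c z) = 0 := by
      simp only [mul_sub, Finset.sum_sub_distrib, ← Finset.sum_mul, hustar.2, one_mul, hS]
      ring
    intro z
    have hz := (Finset.sum_eq_zero_iff_of_nonneg
      (fun w _ => mul_nonneg (hupos w).le (by linarith [hSle w]))).mp h0 z (Finset.mem_univ z)
    rcases mul_eq_zero.mp hz with h | h
    · exact absurd h (hupos z).ne'
    · linarith
  -- final assembly
  have hsc : ∑ z, u z * c z = S := by
    rw [Finset.sum_congr rfl (fun z _ => by rw [hceq z]), ← Finset.sum_mul, hu.2, one_mul]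
  have hdiff : cap P - phi u P = (∑ y, g (qs y) (∑ z, u z * P z y)) / Real.log 2 := by
    rw [hiden u hu, hcapS, hsc]
    ring
  have hD : ∀ y, (∑ z, u z * P z y) - qs y = ∑ z, (u z - ustar z) * P z y := by
    intro y
    simp [hqs, sub_mul, Finset.sum_sub_distrib]
  have hκ₂ : 0 < κ₂ := by
    have i : Fin m := ⟨0, by omega⟩
    exact hκ₁.trans_le ((hPbound i i).1.trans (hPbound i i).2)
  constructor
  · rw [hdiff, hξ]
    have hle : ∑ y, ((∑ z, u z * P z y) - qs y) ^ 2 / (2 * κ₂)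
        ≤ ∑ y, g (qs y) (∑ z, u z * P z y) :=
      Finset.sum_le_sum fun y _ =>
        breg_lower κ₁ κ₂ (qs y) (∑ z, u z * P z y) hκ₁ (hqsmem y) (hqmem u hu y)
    simp only [hD] at hle
    calc (Real.log 2)⁻¹ / (2 * κ₂) * ∑ y, (∑ z, (u z - ustar z) * P z y) ^ 2
        = (∑ y, (∑ z, (u z - ustar z) * P z y) ^ 2 / (2 * κ₂)) / Real.log 2 := by
          rw [← Finset.sum_div]; ring
      _ ≤ (∑ y, g (qs y) (∑ z, u z * P z y)) / Real.log 2 := by gcongr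
  · rw [hdiff, hξ]
    have hle : ∑ y, g (qs y) (∑ z, u z * P z y)
        ≤ ∑ y, ((∑ z, u z * P z y) - qs y) ^ 2 / (2 * κ₁) :=
      Finset.sum_le_sum fun y _ =>
        breg_upper κ₁ κ₂ (qs y) (∑ z, u z * P z y) hκ₁ (hqsmem y) (hqmem u hu y)
    simp only [hD] at hle
    calc (∑ y, g (qs y) (∑ z, u z * P z y)) / Real.log 2
        ≤ (∑ y, (∑ z, (u z - ustar z) * P z y) ^ 2 / (2 * κ₁)) / Real.log 2 := by gcongr
      _ = (Real.log 2)⁻¹ / (2 * κ₁) * ∑ y, (∑ z, (u z - ustar z) * P z y) ^ 2 := by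
          rw [← Finset.sum_div]; ring
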